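/- Let E be a real Banach space, P : E → E a continuous linear map, S, T : ℝ → (E → E) two families of continuous linear operators such that for every x ∈ E the maps t ↦ S(t)x and t ↦ T(t)x are continuous, and suppose there are constants M, M_Q > 0 and ω, ω_Q ∈ ℝ with ‖S(t)‖ ≤ M·exp(ω·t) and ‖T(t)‖ ≤ M_Q·exp(ω_Q·t) for all t ≥ 0. Fix T > 0 and an integer p ≥ 1, and set A₁ = max(1, exp(T·(ω − ω_Q))), A₂ = max(1, exp(T·ω_Q)), A₃ = max(1, exp(T·ω)). Then for every v ∈ E and every t with 0 ≤ t ≤ T, the error of the p-th order H_t-model satisfies ‖∫₀ᵗ ((t−σ)^{p−1}/(p−1)!) · (∫₀^σ P(S(s)(P(T(σ−s)v))) ds − σ·P(S(σ)(P v))) dσ‖ ≤ (C₁·A₁·A₂ + (C₁/M_Q)·A₃)·t^{p+1}/(p+1)!, where C₁ = M·M_Q·‖P‖²·‖v‖. -/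

import Mathlib

/-!
Split the error at level `σ` into the memory integral and the t-model term. Each is bounded by a
constant times `σ`: the integrand `P S(s) P T(σ - s) v` by `C e^{ωs} e^{ω_Q (σ - s)}
= C e^{(ω - ω_Q)s} e^{ω_Q σ} ≤ C A₁ A₂`, and `P S(σ) P v` by `(C / M_Q) A₃`. Integrating a
bound `K σ` against the Cauchy kernel `(t - σ)^(p-1) / (p-1)!` gives `K t^(p+1) / (p+1)!`.
-/

open MeasureTheory intervalIntegral Filter

theorem Real.exp_mul_le_max_one_exp {c s τ : ℝ} (hs : 0 ≤ s) (hsτ : s ≤ τ) :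
    Real.exp (c * s) ≤ max 1 (Real.exp (τ * c)) := by
  rcases le_or_gt c 0 with hc | hc
  · exact le_max_of_le_left (Real.exp_le_one_iff.mpr (mul_nonpos_of_nonpos_of_nonneg hc hs))
  · exact le_max_of_le_right (Real.exp_le_exp.mpr (by nlinarith))

theorem integral_sub_pow_div_factorial_mul_self (t : ℝ) (q : ℕ) :
    ∫ σ in (0:ℝ)..t, (t - σ) ^ q / (q.factorial : ℝ) * σ =
      t ^ (q + 2) / ((q + 2).factorial : ℝ) := by
  have hreflect :
      ∫ σ in (0:ℝ)..t, (t - σ) ^ q * σ = ∫ u in (0:ℝ)..t, (t * u ^ q - u ^ (q + 1)) := by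
    simpa [pow_succ, mul_sub, mul_comm] using
      integral_comp_sub_left (a := 0) (b := t) (fun u : ℝ => u ^ q * (t - u)) t
  simp_rw [div_mul_eq_mul_div, intervalIntegral.integral_div, hreflect]
  rw [intervalIntegral.integral_sub (f := fun u => t * u ^ q) (g := fun u => u ^ (q + 1))
    ((continuous_const.mul (continuous_pow q)).intervalIntegrable _ _)
    ((continuous_pow (q + 1)).intervalIntegrable _ _), intervalIntegral.integral_const_mul,
    integral_pow, integral_pow, Nat.factorial_succ, Nat.factorial_succ]
  push_cast
  field_simp
  ring

theorem norm_integral_cauchy_kernel_smul_le {E : Type*} [NormedAddCommGroup E] [NormedSpace ℝ E]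
    {f : ℝ → E} {t K : ℝ} (q : ℕ) (ht : 0 ≤ t) (hf : ∀ σ ∈ Set.Ioc 0 t, ‖f σ‖ ≤ K * σ) :
    ‖∫ σ in (0:ℝ)..t, ((t - σ) ^ q / (q.factorial : ℝ)) • f σ‖ ≤
      K * t ^ (q + 2) / ((q + 2).factorial : ℝ) := by
  have hkernel : ∀ σ ∈ Set.Ioc 0 t,
      ‖((t - σ) ^ q / (q.factorial : ℝ)) • f σ‖ ≤ K * ((t - σ) ^ q / (q.factorial : ℝ) * σ) := by
    intro σ hσ
    have hw : 0 ≤ (t - σ) ^ q / (q.factorial : ℝ) := by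
      have : 0 ≤ t - σ := sub_nonneg.mpr hσ.2
      positivity
    rw [norm_smul, Real.norm_of_nonneg hw]
    nlinarith [hf σ hσ]
  calc _ ≤ ∫ σ in (0:ℝ)..t, K * ((t - σ) ^ q / (q.factorial : ℝ) * σ) :=
        norm_integral_le_of_norm_le ht (ae_of_all _ hkernel) (Continuous.intervalIntegrable
          (by fun_prop) _ _)
    _ = K * t ^ (q + 2) / ((q + 2).factorial : ℝ) := by
        rw [intervalIntegral.integral_const_mul, integral_sub_pow_div_factorial_mul_self,
          mul_div_assoc]

section Semigroups

variable {E : Type*} [NormedAddCommGroup E] [NormedSpace ℝ E]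
  (P : E →L[ℝ] E) {S T : ℝ → (E →L[ℝ] E)} {M MQ ω ωQ : ℝ}

theorem norm_memory_integrand_le (hM : 0 ≤ M) (hMQ : 0 ≤ MQ)
    (hS : ∀ t : ℝ, 0 ≤ t → ‖S t‖ ≤ M * Real.exp (ω * t))
    (hT : ∀ t : ℝ, 0 ≤ t → ‖T t‖ ≤ MQ * Real.exp (ωQ * t))
    (v : E) {s σ τ : ℝ} (hs : 0 ≤ s) (hsσ : s ≤ σ) (hστ : σ ≤ τ) :
    ‖P (S s (P (T (σ - s) v)))‖ ≤ M * MQ * ‖P‖ ^ 2 * ‖v‖ *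
      max 1 (Real.exp (τ * (ω - ωQ))) * max 1 (Real.exp (τ * ωQ)) := by
  have hσ : 0 ≤ σ := hs.trans hsσ
  have hnorm : ‖P (S s (P (T (σ - s) v)))‖ ≤
      ‖P‖ * (M * Real.exp (ω * s) * (‖P‖ * (MQ * Real.exp (ωQ * (σ - s)) * ‖v‖))) :=
    P.le_opNorm_of_le <| (S s).le_of_opNorm_le_of_le (hS s hs) <| P.le_opNorm_of_le <|
      (T _).le_of_opNorm_le_of_le (hT _ (sub_nonneg.mpr hsσ)) le_rfl
  have hexp : Real.exp (ω * s) * Real.exp (ωQ * (σ - s)) =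
      Real.exp ((ω - ωQ) * s) * Real.exp (ωQ * σ) := by
    rw [← Real.exp_add, ← Real.exp_add]; ring_nf
  calc _ ≤ _ := hnorm
    _ = M * MQ * ‖P‖ ^ 2 * ‖v‖ * (Real.exp ((ω - ωQ) * s) * Real.exp (ωQ * σ)) := by
        rw [← hexp]; ring
    _ ≤ M * MQ * ‖P‖ ^ 2 * ‖v‖ *
        (max 1 (Real.exp (τ * (ω - ωQ))) * max 1 (Real.exp (τ * ωQ))) := by
        gcongr
        · exact Real.exp_mul_le_max_one_exp hs (hsσ.trans hστ)
        · exact Real.exp_mul_le_max_one_exp hσ hστ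
    _ = _ := by ring

theorem norm_memory_integral_le (hM : 0 ≤ M) (hMQ : 0 ≤ MQ)
    (hS : ∀ t : ℝ, 0 ≤ t → ‖S t‖ ≤ M * Real.exp (ω * t))
    (hT : ∀ t : ℝ, 0 ≤ t → ‖T t‖ ≤ MQ * Real.exp (ωQ * t))
    (v : E) {σ τ : ℝ} (hσ : 0 ≤ σ) (hστ : σ ≤ τ) :
    ‖∫ s in (0:ℝ)..σ, P (S s (P (T (σ - s) v)))‖ ≤ M * MQ * ‖P‖ ^ 2 * ‖v‖ *
      max 1 (Real.exp (τ * (ω - ωQ))) * max 1 (Real.exp (τ * ωQ)) * σ := by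
  have hbound : ∀ s ∈ Set.uIoc 0 σ, ‖P (S s (P (T (σ - s) v)))‖ ≤ M * MQ * ‖P‖ ^ 2 * ‖v‖ *
      max 1 (Real.exp (τ * (ω - ωQ))) * max 1 (Real.exp (τ * ωQ)) := by
    intro s hs
    rw [Set.uIoc_of_le hσ] at hs
    exact norm_memory_integrand_le P hM hMQ hS hT v hs.1.le hs.2 hστ
  simpa [abs_of_nonneg hσ] using norm_integral_le_of_norm_le_const hbound

theorem norm_smul_t_model_le (hM : 0 ≤ M) (hS : ∀ t : ℝ, 0 ≤ t → ‖S t‖ ≤ M * Real.exp (ω * t))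
    (v : E) {σ τ : ℝ} (hσ : 0 ≤ σ) (hστ : σ ≤ τ) :
    ‖σ • P (S σ (P v))‖ ≤ M * ‖P‖ ^ 2 * ‖v‖ * max 1 (Real.exp (τ * ω)) * σ := by
  calc ‖σ • P (S σ (P v))‖ ≤ σ * (‖P‖ * (M * Real.exp (ω * σ) * (‖P‖ * ‖v‖))) := by
        rw [norm_smul, Real.norm_of_nonneg hσ]
        gcongr
        exact P.le_opNorm_of_le <| (S σ).le_of_opNorm_le_of_le (hS σ hσ) (P.le_opNorm v)
    _ = M * Real.exp (ω * σ) * (‖P‖ ^ 2 * ‖v‖) * σ := by ring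
    _ ≤ M * max 1 (Real.exp (τ * ω)) * (‖P‖ ^ 2 * ‖v‖) * σ := by
        gcongr
        exact Real.exp_mul_le_max_one_exp hσ hστ
    _ = _ := by ring

end Semigroups

theorem mz_Ht_model_accuracy_general
    {E : Type*} [NormedAddCommGroup E] [NormedSpace ℝ E]
    (P : E →L[ℝ] E) (S T : ℝ → (E →L[ℝ] E))
    (M MQ : ℝ) (hM : 0 < M) (hMQ : 0 < MQ) (ω ωQ : ℝ)
    (hS : ∀ t : ℝ, 0 ≤ t → ‖S t‖ ≤ M * Real.exp (ω * t))
    (hT : ∀ t : ℝ, 0 ≤ t → ‖T t‖ ≤ MQ * Real.exp (ωQ * t))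
    (Tf : ℝ) (p : ℕ) (hp : 1 ≤ p)
    (A₁ A₂ A₃ : ℝ) (hA₁ : A₁ = max 1 (Real.exp (Tf * (ω - ωQ))))
    (hA₂ : A₂ = max 1 (Real.exp (Tf * ωQ)))
    (hA₃ : A₃ = max 1 (Real.exp (Tf * ω)))
    (v : E) (t : ℝ) (ht0 : 0 ≤ t) (htT : t ≤ Tf) :
    ‖∫ σ in (0:ℝ)..t, ((t - σ) ^ (p - 1) / (Nat.factorial (p - 1) : ℝ)) •
        ((∫ s in (0:ℝ)..σ, P (S s (P (T (σ - s) v)))) - σ • P (S σ (P v)))‖ ≤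
      ((M * MQ * ‖P‖ ^ 2 * ‖v‖) * A₁ * A₂ + (M * MQ * ‖P‖ ^ 2 * ‖v‖) / MQ * A₃) *
        t ^ (p + 1) / (Nat.factorial (p + 1) : ℝ) := by
  obtain ⟨q, rfl⟩ : ∃ q, p = q + 1 := ⟨p - 1, (Nat.succ_pred_eq_of_pos hp).symm⟩
  have hCQ : M * MQ * ‖P‖ ^ 2 * ‖v‖ / MQ = M * ‖P‖ ^ 2 * ‖v‖ := by field_simp
  rw [Nat.add_sub_cancel, hCQ]
  refine norm_integral_cauchy_kernel_smul_le q ht0 fun σ hσ => ?_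
  have hσTf : σ ≤ Tf := hσ.2.trans htT
  calc _ ≤ _ := norm_sub_le _ _
    _ ≤ M * MQ * ‖P‖ ^ 2 * ‖v‖ * A₁ * A₂ * σ + M * ‖P‖ ^ 2 * ‖v‖ * A₃ * σ := by
        subst hA₁ hA₂ hA₃
        exact add_le_add (norm_memory_integral_le P hM.le hMQ.le hS hT v hσ.1.le hσTf)
          (norm_smul_t_model_le P hM.le hS v hσ.1.le hσTf)
    _ = _ := by ring

/-- **Accuracy of the `H_t`-model** (Theorem 3.12, abstract form). Bound on the
p-th order `H_t`-model error of the Mori–Zwanzig memory integral, written via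
Cauchy's formula for repeated integration: the `p`-th level memory integral is
replaced by the classical t-model `σ • P S(σ) P v`. -/
theorem mz_Ht_model_accuracy
    {E : Type*} [NormedAddCommGroup E] [NormedSpace ℝ E] [CompleteSpace E]
    (P : E →L[ℝ] E) (S T : ℝ → (E →L[ℝ] E))
    (hScont : ∀ x : E, Continuous fun t : ℝ => S t x)
    (hTcont : ∀ x : E, Continuous fun t : ℝ => T t x)
    (M MQ : ℝ) (hM : 0 < M) (hMQ : 0 < MQ) (ω ωQ : ℝ)
    (hS : ∀ t : ℝ, 0 ≤ t → ‖S t‖ ≤ M * Real.exp (ω * t))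
    (hT : ∀ t : ℝ, 0 ≤ t → ‖T t‖ ≤ MQ * Real.exp (ωQ * t))
    (Tf : ℝ) (hTf : 0 < Tf) (p : ℕ) (hp : 1 ≤ p)
    (A₁ A₂ A₃ : ℝ) (hA₁ : A₁ = max 1 (Real.exp (Tf * (ω - ωQ))))
    (hA₂ : A₂ = max 1 (Real.exp (Tf * ωQ)))
    (hA₃ : A₃ = max 1 (Real.exp (Tf * ω)))
    (v : E) (t : ℝ) (ht0 : 0 ≤ t) (htT : t ≤ Tf) :
    ‖∫ σ in (0:ℝ)..t, ((t - σ) ^ (p - 1) / (Nat.factorial (p - 1) : ℝ)) •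
        ((∫ s in (0:ℝ)..σ, P (S s (P (T (σ - s) v)))) - σ • P (S σ (P v)))‖ ≤
      ((M * MQ * ‖P‖ ^ 2 * ‖v‖) * A₁ * A₂ + (M * MQ * ‖P‖ ^ 2 * ‖v‖) / MQ * A₃) *
        t ^ (p + 1) / (Nat.factorial (p + 1) : ℝ) :=
  mz_Ht_model_accuracy_general P S T M MQ hM hMQ ω ωQ hS hT Tf p hp A₁ A₂ A₃ hA₁ hA₂ hA₃ v t ht0 htT
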